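/- (Stability implies preservation for a store off the path.) Let (s, h) be well-behaved, π acyclic and disconnected in (s, h), and consider executing π' := x where π' is not a prefix of π, x ≠ root(π), and ⟨π'⟩_{s,h} ∈ dom h, yielding state (s, h[⟨π'⟩_{s,h} ↦ s(x)]). Then π is preserved from (s, h) to the new state. -/

import Mathlib

/-- Variables. -/
abbrev Var := ℕ
/-- Fld names. -/
abbrev Fld := ℕ
/-- Object locations. -/
abbrev Loc := ℕ
/-- Addresses in the field-splitting style. -/
abbrev Addr := Loc × Fld
/-- Stacks (stores). -/
abbrev Stack := Var → Loc
/-- Partial heaps. -/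
abbrev Heap := Addr → Option Loc

/-- Follow a list of fields starting from a given address. -/
def lvalAux (h : Heap) : Addr → List Fld → Option Addr
  | a, [] => some a
  | a, f :: fs => (h a).bind fun ℓ => lvalAux h (ℓ, f) fs

/-- The address `⟨x.fs⟩_{s,h}` of the access path `x.fs`
    (`none` if undefined, and paths must have a nonempty field list). -/
def lval (s : Stack) (h : Heap) (x : Var) : List Fld → Option Addr
  | [] => none
  | f :: fs => lvalAux h (s x, f) fs

/-- Domain of a partial map. -/
def pdom {β : Type} (m : Addr → Option β) : Set Addr := {a | (m a).isSome}

/-- Domain of a heap. -/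
def hdom (h : Heap) : Set Addr := {a | (h a).isSome}

/-- The locations underlying a set of addresses. -/
def locs (A : Set Addr) : Set Loc := Prod.fst '' A

/-- The set of addresses of all (nonempty) prefixes of the path `x.fs`:
    the domain of its footprint. -/
def footDom (s : Stack) (h : Heap) (x : Var) (fs : List Fld) : Set Addr :=
  {a | ∃ gs : List Fld, gs ≠ [] ∧ gs <+: fs ∧ lval s h x gs = some a}

open Classical in
/-- The footprint `h⟨s, x.fs⟩` of the path `x.fs`: the partial map defined exactly
    on the addresses of prefixes of the path, mapping `⟨π'⟩` to `h ⟨π'⟩`. -/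
noncomputable def footprint (s : Stack) (h : Heap) (x : Var) (fs : List Fld) :
    Addr → Option (Option Loc) :=
  fun a => if a ∈ footDom s h x fs then some (h a) else none

/-- Acyclicity of the path `x.fs` in state `(s, h)`. -/
def Acyclic (s : Stack) (h : Heap) (x : Var) (fs : List Fld) : Prop :=
  (lval s h x fs).isSome ∧
  ∀ (gs' gs : List Fld) (a a' : Addr), gs' ≠ [] → gs' <+: gs → gs <+: fs →
    lval s h x gs = some a → lval s h x gs' = some a' → h a ≠ some a'.1

/-- Disconnectedness of the path `x.fs` in state `(s, h)`. -/
def Disconnected (s : Stack) (h : Heap) (x : Var) (fs : List Fld) : Prop :=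
  (lval s h x fs).isSome ∧
  (∀ y, y ≠ x → s y ∉ locs (footDom s h x fs)) ∧
  (∀ a ℓ, h a = some ℓ → ℓ ∈ locs (footDom s h x fs) → a ∈ footDom s h x fs)

/-- The path `x.fs` is preserved from `(s, h)` to `(s', h')`. -/
def Preserved (x : Var) (fs : List Fld) (s : Stack) (h : Heap)
    (s' : Stack) (h' : Heap) : Prop :=
  Disconnected s h x fs ∧ Acyclic s h x fs ∧
  Disconnected s' h' x fs ∧ Acyclic s' h' x fs ∧
  s x = s' x ∧
  footDom s h x fs = footDom s' h' x fs ∧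
  (∀ a ∈ footDom s h x fs, lval s h x fs ≠ some a → h a = h' a)

/-- Well-behavedness of a state. -/
def WellBehaved (s : Stack) (h : Heap) : Prop :=
  (∀ y, s y ∈ locs (hdom h)) ∧ (∀ a ℓ, h a = some ℓ → ℓ ∈ locs (hdom h))

section Aux

lemma lvalAux_append (h : Heap) (a : Addr) (l : List Fld) (f : Fld) :
    lvalAux h a (l ++ [f]) = (lvalAux h a l).bind fun b => (h b).map fun ℓ => (ℓ, f) := by
  induction l generalizing a with
  | nil =>
    simp only [List.nil_append, lvalAux, Option.bind_some]
    cases h a <;> rfl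
  | cons g l ih =>
    simp only [List.cons_append, lvalAux]
    cases h a with
    | none => rfl
    | some ℓ => simpa using ih (ℓ, g)

lemma lval_snoc (s : Stack) (h : Heap) (x : Var) (l : List Fld) (hl : l ≠ []) (f : Fld) :
    lval s h x (l ++ [f]) = (lval s h x l).bind fun b => (h b).map fun ℓ => (ℓ, f) := by
  cases l with
  | nil => exact absurd rfl hl
  | cons g l => simpa [lval] using lvalAux_append h (s x, g) l f

lemma lval_single (s : Stack) (h : Heap) (x : Var) (f : Fld) :
    lval s h x [f] = some (s x, f) := rfl

lemma mem_footDom_of (s : Stack) (h : Heap) (z : Var) (fs : List Fld) {t : List Fld}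
    (ht : t ≠ []) (htfs : t <+: fs) {b : Addr} (hb : lval s h z t = some b) :
    b ∈ footDom s h z fs := ⟨t, ht, htfs, hb⟩

lemma fst_mem_locs {A : Set Addr} {b : Addr} (hb : b ∈ A) : b.1 ∈ locs A :=
  ⟨b, hb, rfl⟩

/-- First components of distinct addresses along an acyclic path are distinct. -/
lemma firsts_ne {s : Stack} {h : Heap} {z : Var} {fs : List Fld}
    (hac : Acyclic s h z fs) {p q : List Fld} (hp : p ≠ [])
    (hpfs : p <+: fs) (hqfs : q <+: fs) (hlen : p.length < q.length)
    {b c : Addr} (hb : lval s h z p = some b) (hc : lval s h z q = some c) :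
    c.1 ≠ b.1 := by
  have hplen : 0 < p.length := List.length_pos_iff.mpr hp
  rcases List.eq_nil_or_concat q with rfl | ⟨q₀, f, rfl⟩
  · simp at hlen
  · rw [List.concat_eq_append] at hqfs hlen hc
    rw [List.length_append, List.length_singleton] at hlen
    have hq₀ : q₀ ≠ [] := by
      intro h0
      rw [h0] at hlen
      simp only [List.length_nil] at hlen
      omega
    rw [lval_snoc s h z q₀ hq₀ f] at hc
    rcases Option.bind_eq_some_iff.mp hc with ⟨d, hd, hmap⟩
    rcases Option.map_eq_some_iff.mp hmap with ⟨ℓ, hℓ, hcl⟩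
    have hq₀fs : q₀ <+: fs := ((q₀.prefix_append [f]).trans hqfs)
    have hpq₀ : p <+: q₀ := List.prefix_of_prefix_length_le hpfs hq₀fs (by omega)
    have hdc : h d = some c.1 := by rw [hℓ, ← hcl]
    intro hcb
    exact hac.2 p q₀ d b hp hpq₀ hq₀fs hd hb (by rw [hdc, hcb])

/-- The non-prefix lemma, main induction. -/
lemma np_main {s : Stack} {h : Heap} {z w : Var} {fs : List Fld}
    (hac : Acyclic s h z fs) (hdisc : Disconnected s h z fs) (hfs : fs ≠ []) :
    ∀ t : List Fld, t ≠ [] → ∀ b : Addr, lval s h w t = some b →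
      b ∈ footDom s h z fs → w = z ∧ t <+: fs ∧ lval s h z t = some b := by
  intro t
  induction t using List.reverseRecOn with
  | nil => intro h0; exact absurd rfl h0
  | append_singleton t₀ f ih =>
    intro _ b hb hbmem
    rcases hbmem with ⟨gs', hgs'ne, hgs'fs, hb'⟩
    by_cases ht₀ : t₀ = []
    · -- base case: t = [f], b = (s w, f)
      subst ht₀
      simp only [List.nil_append] at hb ⊢
      rw [lval_single] at hb
      have hb2 : b = (s w, f) := (Option.some.inj hb).symm
      have hwz : w = z := by
        by_contra hne
        apply hdisc.2.1 w hne
        have hb1 : b.1 = s w := by rw [hb2]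
        rw [← hb1]
        exact fst_mem_locs ⟨gs', hgs'ne, hgs'fs, hb'⟩
      rw [hwz] at hb2
      obtain ⟨f1, fs', rfl⟩ : ∃ f1 fs', fs = f1 :: fs' := by
        cases fs with
        | nil => exact absurd rfl hfs
        | cons f1 fs' => exact ⟨f1, fs', rfl⟩
      have hhead : lval s h z [f1] = some (s z, f1) := lval_single s h z f1
      have hheadp : [f1] <+: f1 :: fs' := ⟨fs', rfl⟩
      rcases Nat.lt_or_ge 1 gs'.length with hlt | hge
      · exfalso
        have hne := firsts_ne hac (by simp : ([f1] : List Fld) ≠ []) hheadp hgs'fs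
          (by simpa using hlt) hhead hb'
        apply hne
        rw [hb2]
      · have hlen1 : gs'.length = 1 := by
          have : gs'.length ≠ 0 := by simpa using hgs'ne
          omega
        obtain ⟨g, rfl⟩ := List.length_eq_one_iff.mp hlen1
        rw [lval_single] at hb'
        have hg : g = f := by
          have h1 : ((s z : Loc), g) = b := Option.some.inj hb'
          rw [hb2] at h1
          exact ((Prod.mk.injEq _ _ _ _).mp h1).2
        subst hg
        exact ⟨hwz, hgs'fs, by rw [lval_single, hb2]⟩
    · -- inductive case
      rw [lval_snoc s h w t₀ ht₀ f] at hb
      rcases Option.bind_eq_some_iff.mp hb with ⟨c, hc, hmap⟩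
      rcases Option.map_eq_some_iff.mp hmap with ⟨ℓ, hℓ, hbl⟩
      have hℓ' : h c = some b.1 := by rw [hℓ, ← hbl]
      have hcmem : c ∈ footDom s h z fs := by
        apply hdisc.2.2 c b.1 hℓ'
        exact fst_mem_locs ⟨gs', hgs'ne, hgs'fs, hb'⟩
      obtain ⟨hwz, ht₀fs, hct₀⟩ := ih ht₀ c hc hcmem
      have hlt : t₀.length < gs'.length := by
        by_contra hle
        have hpq : gs' <+: t₀ :=
          List.prefix_of_prefix_length_le hgs'fs ht₀fs (by omega)
        exact hac.2 gs' t₀ c b hgs'ne hpq ht₀fs hct₀ hb' hℓ'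
      set q := gs'.take (t₀.length + 1) with hq
      have hqgs' : q <+: gs' := List.take_prefix _ _
      have hqfs : q <+: fs := hqgs'.trans hgs'fs
      have hqlen : q.length = t₀.length + 1 := by
        rw [hq, List.length_take]
        omega
      have ht₀q : t₀ <+: q := by
        apply List.prefix_of_prefix_length_le ht₀fs hqfs
        omega
      obtain ⟨r, hr⟩ := ht₀q
      have hrlen : r.length = 1 := by
        have := congrArg List.length hr
        simp at this
        omega
      obtain ⟨f', rfl⟩ := List.length_eq_one_iff.mp hrlen
      have hqval : lval s h z q = some (b.1, f') := by
        rw [← hr, lval_snoc s h z t₀ ht₀ f', hct₀]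
        simp [hℓ']
      have hqeq : q = gs' := by
        by_contra hne
        have hltq : q.length < gs'.length := by
          rcases Nat.lt_or_ge q.length gs'.length with h1 | h1
          · exact h1
          · exact absurd (List.IsPrefix.eq_of_length hqgs' (by omega)) hne
        have hne2 := firsts_ne hac (by
          intro h0
          rw [h0] at hqlen
          simp at hqlen) hqfs hgs'fs hltq hqval hb'
        simp at hne2
      have hf' : f' = f := by
        rw [hqeq] at hqval
        rw [hqval] at hb'
        have h1 : ((b.1 : Loc), f') = b := Option.some.inj hb'
        rw [← hbl] at h1
        exact ((Prod.mk.injEq _ _ _ _).mp h1).2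
      subst hf'
      refine ⟨hwz, ?_, ?_⟩
      · rw [hr, hqeq]; exact hgs'fs
      · rw [hr, hqval, ← hbl]

lemma lval_update {s : Stack} {h : Heap} {z : Var} {fs : List Fld} {a : Addr}
    (hanf : a ∉ footDom s h z fs) (v : Option Loc) :
    ∀ t : List Fld, t <+: fs →
      lval s (Function.update h a v) z t = lval s h z t := by
  intro t
  induction t using List.reverseRecOn with
  | nil => intro _; rfl
  | append_singleton t₀ f ih =>
    intro htfs
    by_cases ht₀ : t₀ = []
    · subst ht₀; rfl
    · have ht₀fs : t₀ <+: fs := (t₀.prefix_append [f]).trans htfs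
      rw [lval_snoc _ _ z t₀ ht₀ f, lval_snoc s h z t₀ ht₀ f, ih ht₀fs]
      cases hc : lval s h z t₀ with
      | none => rfl
      | some c =>
        have hcmem : c ∈ footDom s h z fs := ⟨t₀, ht₀, ht₀fs, hc⟩
        have hca : c ≠ a := fun h0 => hanf (h0 ▸ hcmem)
        simp [Function.update_of_ne hca]

lemma footDom_update {s : Stack} {h : Heap} {z : Var} {fs : List Fld} {a : Addr}
    (hanf : a ∉ footDom s h z fs) (v : Option Loc) :
    footDom s (Function.update h a v) z fs = footDom s h z fs := by
  ext b
  constructor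
  · rintro ⟨t, ht, htfs, hb⟩
    exact ⟨t, ht, htfs, by rw [← lval_update hanf v t htfs]; exact hb⟩
  · rintro ⟨t, ht, htfs, hb⟩
    exact ⟨t, ht, htfs, by rw [lval_update hanf v t htfs]; exact hb⟩

end Aux

/-- (Stability implies preservation for a store off the path.) Let
`(s, h)` be well-behaved and `π = z.fs` acyclic and disconnected in `(s, h)`. Executing
`π' := x` with `π' = w.gs`, where `π'` is not a prefix of `π`, `x ≠ z = root π`, and
`⟨π'⟩ ∈ dom h`, yields `(s, h[⟨π'⟩ ↦ s x])`, and `π` is preserved from `(s, h)` to the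
new state. -/
theorem store_off_path_preserves (s : Stack) (h : Heap) (z w x : Var)
    (fs gs : List Fld) (hgs : gs ≠ [])
    (hwb : WellBehaved s h)
    (hac : Acyclic s h z fs) (hdisc : Disconnected s h z fs)
    (hnp : ¬ (w = z ∧ gs <+: fs))
    (hx : x ≠ z)
    (a : Addr) (ha : lval s h w gs = some a) (hadom : a ∈ hdom h) :
    Preserved z fs s h s (Function.update h a (some (s x))) := by
  classical
  have hfs : fs ≠ [] := by
    intro h0
    have h1 := hac.1
    rw [h0] at h1
    simp [lval] at h1
  -- the non-prefix lemma: a is off the footprint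
  have hanf : a ∉ footDom s h z fs := by
    intro hmem
    obtain ⟨hwz, hgsfs, _⟩ := np_main hac hdisc hfs gs hgs a ha hmem
    exact hnp ⟨hwz, hgsfs⟩
  set h' := Function.update h a (some (s x)) with hh'
  have hlu : ∀ t : List Fld, t <+: fs → lval s h' z t = lval s h z t :=
    lval_update hanf _
  have hfd : footDom s h' z fs = footDom s h z fs := footDom_update hanf _
  have hlfs : lval s h' z fs = lval s h z fs := hlu fs (List.prefix_refl fs)
  have hac' : Acyclic s h' z fs := by
    constructor
    · rw [hlfs]; exact hac.1
    · intro gs' gsq aa a' hne h1 h2 hl hl'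
      have hgsqfs : gsq <+: fs := h2
      have hgs'fs : gs' <+: fs := h1.trans h2
      rw [hlu gsq hgsqfs] at hl
      rw [hlu gs' hgs'fs] at hl'
      have hgsqne : gsq ≠ [] := by
        intro h0
        rw [h0] at h1
        exact hne (List.prefix_nil.mp h1)
      have haamem : aa ∈ footDom s h z fs := ⟨gsq, hgsqne, hgsqfs, hl⟩
      have haaa : aa ≠ a := fun h0 => hanf (h0 ▸ haamem)
      rw [hh', Function.update_of_ne haaa]
      exact hac.2 gs' gsq aa a' hne h1 h2 hl hl'
  have hdisc' : Disconnected s h' z fs := by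
    refine ⟨by rw [hlfs]; exact hdisc.1, ?_, ?_⟩
    · intro y hy
      rw [hfd]
      exact hdisc.2.1 y hy
    · intro b ℓ hb hℓ
      rw [hfd] at hℓ ⊢
      by_cases hba : b = a
      · exfalso
        subst hba
        rw [hh', Function.update_self] at hb
        have : ℓ = s x := Option.some.inj hb.symm |>.symm ▸ rfl
        have hsx : (s x : Loc) = ℓ := Option.some.inj hb
        rw [← hsx] at hℓ
        exact hdisc.2.1 x hx hℓ
      · rw [hh', Function.update_of_ne hba] at hb
        exact hdisc.2.2 b ℓ hb hℓ
  refine ⟨hdisc, hac, hdisc', hac', rfl, hfd.symm, ?_⟩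
  intro b hb _
  have hba : b ≠ a := fun h0 => hanf (h0 ▸ hb)
  rw [hh', Function.update_of_ne hba]
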